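/- arXiv:2010.04282 — 3 statements merged into one kernel-verified Lean document; each statement's English description precedes it below -/
import Mathlib

section
/- Let K be a finite set and Bad a monotone predicate on subsets of K. For any X ⊆ K, X is a diagnosis (i.e., ¬Bad (K \ X)) if and only if K \ X is not a conflict (i.e., ¬Bad (K \ X)). More substantively: X contains a minimal diagnosis if and only if K \ X does not contain a minimal conflict. -/
/-- `C` is a conflict: a subset of `K` satisfying `Bad`. -/
def IsConflict {α : Type*} (K : Finset α) (Bad : Finset α → Prop) (C : Finset α) : Prop :=
  C ⊆ K ∧ Bad C

/-- `C` is a minimal conflict. -/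
def IsMinConflict {α : Type*} (K : Finset α) (Bad : Finset α → Prop) (C : Finset α) : Prop :=
  IsConflict K Bad C ∧ ∀ C' : Finset α, C' ⊂ C → ¬ IsConflict K Bad C'

/-- `D` is a diagnosis: a subset of `K` whose removal makes `Bad` false. -/
def IsDiagnosis {α : Type*} [DecidableEq α] (K : Finset α) (Bad : Finset α → Prop)
    (D : Finset α) : Prop :=
  D ⊆ K ∧ ¬ Bad (K \ D)

/-- `D` is a minimal diagnosis. -/
def IsMinDiagnosis {α : Type*} [DecidableEq α] (K : Finset α) (Bad : Finset α → Prop)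
    (D : Finset α) : Prop :=
  IsDiagnosis K Bad D ∧ ∀ D' : Finset α, D' ⊂ D → ¬ IsDiagnosis K Bad D'

lemma exists_min_pred {α : Type*} (P : Finset α → Prop) :
    ∀ S : Finset α, P S → ∃ T, T ⊆ S ∧ P T ∧ ∀ T', T' ⊂ T → ¬ P T' := by
  intro S
  induction S using Finset.strongInductionOn with
  | _ S ih =>
    intro hS
    by_cases h : ∀ T, T ⊂ S → ¬ P T
    · exact ⟨S, subset_rfl, hS, h⟩
    · push_neg at h
      obtain ⟨T, hT, hPT⟩ := h
      obtain ⟨T', h1, h2, h3⟩ := ih T hT hPT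
      exact ⟨T', h1.trans hT.subset, h2, h3⟩

theorem duality_property {α : Type*} [DecidableEq α] (K : Finset α)
    (Bad : Finset α → Prop)
    (hmono : ∀ S S' : Finset α, S ⊆ S' → Bad S → Bad S')
    (X : Finset α) (hX : X ⊆ K) :
    (IsDiagnosis K Bad X ↔ ¬ IsConflict K Bad (K \ X)) ∧
    ((∃ D, D ⊆ X ∧ IsMinDiagnosis K Bad D) ↔
      ¬ ∃ C, C ⊆ K \ X ∧ IsMinConflict K Bad C) := by
  constructor
  · constructor
    · rintro ⟨-, hB⟩ ⟨-, hB'⟩; exact hB hB'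
    · intro h
      exact ⟨hX, fun hB => h ⟨Finset.sdiff_subset, hB⟩⟩
  · constructor
    · rintro ⟨D, hDX, ⟨⟨hDK, hBad⟩, -⟩⟩ ⟨C, hCKX, ⟨⟨-, hBC⟩, -⟩⟩
      exact hBad (hmono _ _ (hCKX.trans (Finset.sdiff_subset_sdiff subset_rfl hDX)) hBC)
    · intro h
      by_cases hB : Bad (K \ X)
      · exfalso
        obtain ⟨C, h1, h2, h3⟩ := exists_min_pred (IsConflict K Bad) (K \ X)
          ⟨Finset.sdiff_subset, hB⟩
        exact h ⟨C, h1, h2, h3⟩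
      · obtain ⟨D, h1, h2, h3⟩ := exists_min_pred (IsDiagnosis K Bad) X ⟨hX, hB⟩
        exact ⟨D, h1, h2, h3⟩
end

section
/- Let K be a finite set and Bad a monotone predicate on subsets of K. Then D ⊆ K is a diagnosis if and only if D has nonempty intersection with every minimal conflict, i.e., D is a hitting set of the collection of all minimal conflicts. -/
lemma exists_min_conflict {α : Type*} (K : Finset α) (Bad : Finset α → Prop)
    (C : Finset α) (hC : IsConflict K Bad C) :
    ∃ M, M ⊆ C ∧ IsMinConflict K Bad M := by
  induction C using Finset.strongInduction with
  | _ C ih =>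
    by_cases h : ∀ C' : Finset α, C' ⊂ C → ¬ IsConflict K Bad C'
    · exact ⟨C, subset_rfl, hC, h⟩
    · push_neg at h
      obtain ⟨C', hss, hC'⟩ := h
      obtain ⟨M, hM, hmin⟩ := ih C' hss hC'
      exact ⟨M, hM.trans hss.subset, hmin⟩

theorem diagnosis_iff_hitting_set {α : Type*} [DecidableEq α]
    (K : Finset α) (Bad : Finset α → Prop)
    (hmono : ∀ S S' : Finset α, S ⊆ S' → Bad S → Bad S')
    (D : Finset α) (hD : D ⊆ K) :
    ¬ Bad (K \ D) ↔ ∀ C : Finset α, IsMinConflict K Bad C → (D ∩ C).Nonempty := by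
  constructor
  · intro hnb C hC
    rw [Finset.nonempty_iff_ne_empty]
    intro hempty
    apply hnb
    apply hmono C _ _ hC.1.2
    intro x hx
    refine Finset.mem_sdiff.2 ⟨hC.1.1 hx, fun hxD => ?_⟩
    have : x ∈ D ∩ C := Finset.mem_inter.2 ⟨hxD, hx⟩
    simp [hempty] at this
  · intro h hbad
    obtain ⟨M, hM, hmin⟩ := exists_min_conflict K Bad (K \ D) ⟨Finset.sdiff_subset, hbad⟩
    obtain ⟨x, hx⟩ := h M hmin
    rw [Finset.mem_inter] at hx
    exact (Finset.mem_sdiff.1 (hM hx.2)).2 hx.1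
end

section
/- Let K be a finite set and Bad a monotone predicate on subsets of K. Then D ⊆ K is a minimal diagnosis if and only if D is a minimal hitting set of the collection of all minimal conflicts (i.e., D intersects every minimal conflict, and no proper subset of D intersects every minimal conflict). -/
/-- `X` hits every minimal conflict. -/
def HitsAllMinConflicts {α : Type*} [DecidableEq α] (K : Finset α) (Bad : Finset α → Prop)
    (X : Finset α) : Prop :=
  ∀ C : Finset α, IsMinConflict K Bad C → (X ∩ C).Nonempty


lemma exists_min_conflict_subset {α : Type*} (K : Finset α) (Bad : Finset α → Prop)
    (C : Finset α) (hC : IsConflict K Bad C) :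
    ∃ C' ⊆ C, IsMinConflict K Bad C' := by
  induction C using Finset.strongInduction with
  | _ C ih =>
    by_cases h : ∀ C' : Finset α, C' ⊂ C → ¬ IsConflict K Bad C'
    · exact ⟨C, Finset.Subset.refl C, hC, h⟩
    · push_neg at h
      obtain ⟨C', hsub, hC'⟩ := h
      obtain ⟨C'', h1, h2⟩ := ih C' hsub hC'
      exact ⟨C'', h1.trans hsub.subset, h2⟩

lemma diagnosis_iff_hits {α : Type*} [DecidableEq α] (K : Finset α) (Bad : Finset α → Prop)
    (hmono : ∀ S S' : Finset α, S ⊆ S' → Bad S → Bad S')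
    (D : Finset α) (hD : D ⊆ K) :
    IsDiagnosis K Bad D ↔ HitsAllMinConflicts K Bad D := by
  constructor
  · rintro ⟨-, hbad⟩ C ⟨⟨hCK, hCbad⟩, -⟩
    rw [Finset.nonempty_iff_ne_empty]
    intro hempty
    apply hbad
    refine hmono C _ ?_ hCbad
    intro x hx
    refine Finset.mem_sdiff.2 ⟨hCK hx, fun hxD => ?_⟩
    have : x ∈ D ∩ C := Finset.mem_inter.2 ⟨hxD, hx⟩
    simp [hempty] at this
  · intro hhit
    refine ⟨hD, fun hbad => ?_⟩
    obtain ⟨C', hsub, hmin⟩ := exists_min_conflict_subset K Bad (K \ D)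
      ⟨Finset.sdiff_subset, hbad⟩
    obtain ⟨x, hx⟩ := hhit C' hmin
    rw [Finset.mem_inter] at hx
    exact (Finset.mem_sdiff.1 (hsub hx.2)).2 hx.1

theorem minimal_diagnosis_iff_minimal_hitting_set {α : Type*} [DecidableEq α]
    (K : Finset α) (Bad : Finset α → Prop)
    (hmono : ∀ S S' : Finset α, S ⊆ S' → Bad S → Bad S')
    (D : Finset α) (hD : D ⊆ K) :
    IsMinDiagnosis K Bad D ↔
      (HitsAllMinConflicts K Bad D ∧
        ∀ D' : Finset α, D' ⊂ D → ¬ HitsAllMinConflicts K Bad D') := by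
  constructor
  · rintro ⟨hdiag, hminim⟩
    refine ⟨(diagnosis_iff_hits K Bad hmono D hD).1 hdiag, fun D' hD' hhit' => ?_⟩
    exact hminim D' hD'
      ((diagnosis_iff_hits K Bad hmono D' (hD'.subset.trans hD)).2 hhit')
  · rintro ⟨hhit, hminim⟩
    refine ⟨(diagnosis_iff_hits K Bad hmono D hD).2 hhit, fun D' hD' hdiag' => ?_⟩
    exact hminim D' hD'
      ((diagnosis_iff_hits K Bad hmono D' (hD'.subset.trans hD)).1 hdiag')
end
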